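/- arXiv:solv-int/9712004 — 5 statements merged into one kernel-verified Lean document; each statement's English description precedes it below -/
import Mathlib

section
/- Let n ≥ 1, let L : ℝ → Mat_n(ℂ) be differentiable and M : ℝ → Mat_n(ℂ) be such that dL/dt = M(t)L(t) − L(t)M(t) for all t ∈ ℝ. Then for every natural number m, the function t ↦ trace(L(t)^m) is constant on ℝ. In particular, the Lax equation is an isospectral deformation: the characteristic polynomial of L(t) does not depend on t. -/
/-!
Along a Lax flow, `d/dt tr (L ^ m) = ∑ tr (L ^ i * [M, L] * L ^ j)`, and every summand vanishes by
cyclicity of the trace. Over `ℂ`, `det (q A) = ∏ q ρ` over the eigenvalues `ρ` of `A` counted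
with multiplicity, so `tr (A ^ m)` is the `m`-th power sum of the eigenvalues. By Newton's
identities the power sums determine the elementary symmetric functions of the eigenvalues, hence
the characteristic polynomial.
-/

open Polynomial

section LaxPair

variable {𝔸 F G : Type*}

theorem map_pow_mul_commutator_mul_pow_eq_zero [Ring 𝔸] [AddCommGroup F] [FunLike G 𝔸 F]
    [AddMonoidHomClass G 𝔸 F] (τ : G) (hτ : ∀ a b, τ (a * b) = τ (b * a)) (a b : 𝔸) (i j : ℕ) :
    τ (a ^ i * (b * a - a * b) * a ^ j) = 0 := by
  have hcomm : ∀ k, τ ((b * a - a * b) * a ^ k) = 0 := fun k => by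
    rw [sub_mul, map_sub, mul_assoc a, hτ a, mul_assoc, mul_assoc, ← pow_succ', ← pow_succ,
      sub_self]
  rw [mul_assoc, hτ, mul_assoc, ← pow_add, hcomm]

variable [NormedRing 𝔸] [NormedAlgebra ℝ 𝔸] [NormedAddCommGroup F] [NormedSpace ℝ F]

theorem hasDerivAt_map_pow_of_lax (τ : 𝔸 →L[ℝ] F) (hτ : ∀ a b, τ (a * b) = τ (b * a))
    {L M : ℝ → 𝔸} {t : ℝ} (hL : HasDerivAt L (M t * L t - L t * M t) t) (m : ℕ) :
    HasDerivAt (fun s => τ (L s ^ m)) 0 t := by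
  have h := τ.hasFDerivAt.comp_hasDerivAt t (hL.fun_pow' m)
  rwa [map_sum, Finset.sum_eq_zero fun i _ => map_pow_mul_commutator_mul_pow_eq_zero τ hτ _ _ _ _]
    at h

theorem map_pow_eq_of_lax (τ : 𝔸 →L[ℝ] F) (hτ : ∀ a b, τ (a * b) = τ (b * a))
    {L M : ℝ → 𝔸} (hL : ∀ t, HasDerivAt L (M t * L t - L t * M t) t) (m : ℕ) (t s : ℝ) :
    τ (L t ^ m) = τ (L s ^ m) :=
  is_const_of_deriv_eq_zero (fun u => (hasDerivAt_map_pow_of_lax τ hτ (hL u) m).differentiableAt)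
    (fun u => (hasDerivAt_map_pow_of_lax τ hτ (hL u) m).deriv) t s

end LaxPair

section MatrixLax

-- Any norm inducing the product topology would do; this one makes matrices a normed algebra.
attribute [local instance] Matrix.linftyOpNormedRing Matrix.linftyOpNormedAlgebra

theorem Matrix.trace_pow_eq_of_lax {ι 𝕜 : Type*} [Fintype ι] [DecidableEq ι] [RCLike 𝕜]
    {L M : ℝ → Matrix ι ι 𝕜}
    (hL : ∀ t i j, HasDerivAt (fun s => L s i j) ((M t * L t - L t * M t) i j) t) (m : ℕ)
    (t s : ℝ) : (L t ^ m).trace = (L s ^ m).trace :=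
  map_pow_eq_of_lax (traceLinearMap ι ℝ 𝕜).toContinuousLinearMap
    (fun a b => trace_mul_comm a b)
    (fun t => hasDerivAt_pi.2 fun i => hasDerivAt_pi.2 fun j => hL t i j) m t s

end MatrixLax

namespace Multiset
variable {R : Type*} [CommRing R]

theorem aeval_psum_coe [DecidableEq R] (s : Multiset R) (k : ℕ) :
    MvPolynomial.aeval (fun x : s => (x : R)) (MvPolynomial.psum s R k) = (s.map (· ^ k)).sum := by
  conv_rhs => rw [← map_univ_coe s, map_map]
  simp only [MvPolynomial.psum, map_sum, map_pow, MvPolynomial.aeval_X]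
  rfl

theorem mul_esymm_eq_sum (s : Multiset R) (k : ℕ) :
    k * s.esymm k = (-1) ^ (k + 1) *
      ∑ a ∈ Finset.HasAntidiagonal.antidiagonal k with a.1 < k,
        (-1) ^ a.1 * s.esymm a.1 * (s.map (· ^ a.2)).sum := by
  classical
  have := congrArg (MvPolynomial.aeval fun x : s => (x : R)) (MvPolynomial.mul_esymm_eq_sum s R k)
  simpa only [map_mul, map_natCast, map_sum, map_pow, map_neg, map_one,
    MvPolynomial.aeval_esymm_eq_multiset_esymm, map_univ_coe, aeval_psum_coe] using this

theorem esymm_eq_of_sum_map_pow_eq {K : Type*} [Field K] [CharZero K] {s u : Multiset K}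
    (h : ∀ m, 0 < m → (s.map (· ^ m)).sum = (u.map (· ^ m)).sum) (k : ℕ) :
    s.esymm k = u.esymm k := by
  induction k using Nat.strong_induction_on with
  | _ k ih =>
    rcases Nat.eq_zero_or_pos k with rfl | hk
    · simp [esymm]
    · refine mul_left_cancel₀ (Nat.cast_ne_zero.mpr hk.ne') ?_
      rw [mul_esymm_eq_sum, mul_esymm_eq_sum]
      congr 1
      refine Finset.sum_congr rfl fun a ha => ?_
      rw [Finset.mem_filter, Finset.HasAntidiagonal.mem_antidiagonal] at ha
      rw [ih a.1 ha.2, h a.2 (by omega)]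

theorem eq_of_sum_map_pow_eq {K : Type*} [Field K] [CharZero K] {s u : Multiset K}
    (h : ∀ m, (s.map (· ^ m)).sum = (u.map (· ^ m)).sum) : s = u := by
  have hcard : card s = card u := by exact_mod_cast (by simpa using h 0 : (card s : K) = card u)
  have hesymm := esymm_eq_of_sum_map_pow_eq (fun m _ => h m)
  rw [← roots_multiset_prod_X_sub_C s, ← roots_multiset_prod_X_sub_C u,
    prod_X_sub_X_eq_sum_esymm, prod_X_sub_X_eq_sum_esymm, hcard]
  simp only [hesymm]

end Multiset

namespace Matrix
variable {ι K : Type*} [Fintype ι] [DecidableEq ι] [Field K] [IsAlgClosed K]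

theorem card_roots_charpoly (A : Matrix ι ι K) :
    Multiset.card A.charpoly.roots = Fintype.card ι := by
  rw [IsAlgClosed.card_roots_eq_natDegree, charpoly_natDegree_eq_dim]

theorem charpoly_eq_prod_roots (A : Matrix ι ι K) :
    A.charpoly = (A.charpoly.roots.map fun ρ => X - C ρ).prod :=
  (prod_multiset_X_sub_C_of_monic_of_roots_card_eq A.charpoly_monic
    IsAlgClosed.card_roots_eq_natDegree).symm

theorem det_sub_scalar_eq_prod_roots_charpoly (A : Matrix ι ι K) (r : K) :
    (A - scalar ι r).det = (A.charpoly.roots.map fun ρ => ρ - r).prod := by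
  have heval : (scalar ι r - A).det = (A.charpoly.roots.map fun ρ => r - ρ).prod := by
    rw [← eval_charpoly]
    conv_lhs => rw [charpoly_eq_prod_roots A]
    simp [eval_multiset_prod, Multiset.map_map]
  have hneg : (A.charpoly.roots.map fun ρ => ρ - r) =
      ((A.charpoly.roots.map fun ρ => r - ρ).map Neg.neg) := by
    simp [Multiset.map_map]
  rw [← neg_sub, det_neg, heval, hneg, Multiset.prod_map_neg, Multiset.card_map,
    card_roots_charpoly]

theorem det_aeval_eq_prod_roots_charpoly (A : Matrix ι ι K) (q : K[X]) :
    (aeval A q).det = (A.charpoly.roots.map fun ρ => q.eval ρ).prod := by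
  obtain ⟨c, S, hq⟩ : ∃ (c : K) (S : Multiset K), q = C c * (S.map fun r => X - C r).prod :=
    ⟨_, _, (C_leadingCoeff_mul_prod_multiset_X_sub_C
      (IsAlgClosed.card_roots_eq_natDegree (p := q))).symm⟩
  subst hq
  -- Both sides are multiplicative in `q`: compare them on constants and on linear factors.
  let φ : K[X] →* K := detMonoidHom.comp (aeval A : K[X] →ₐ[K] Matrix ι ι K).toMonoidHom
  have hC : φ (C c) = (A.charpoly.roots.map fun _ => c).prod := by
    simp [φ, algebraMap_eq_diagonal, card_roots_charpoly]
  have hX : ∀ r, φ (X - C r) = (A.charpoly.roots.map fun ρ => ρ - r).prod := fun r => by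
    simpa [φ, algebraMap_eq_diagonal, Pi.algebraMap_def, scalar_apply] using
      det_sub_scalar_eq_prod_roots_charpoly A r
  change φ _ = _
  simp only [map_mul, map_multiset_prod, Multiset.map_map, Function.comp_def, hC, hX,
    eval_mul, eval_C, eval_multiset_prod, eval_sub, eval_X]
  rw [Multiset.prod_map_prod_map, ← Multiset.prod_map_mul]

theorem charpoly_aeval_eq_prod_roots_charpoly (A : Matrix ι ι K) (q : K[X]) :
    (aeval A q).charpoly = (A.charpoly.roots.map fun ρ => X - C (q.eval ρ)).prod := by
  refine Polynomial.funext fun c => ?_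
  have : scalar ι c - aeval A q = aeval A (C c - q) := by
    simp [algebraMap_eq_diagonal, Pi.algebraMap_def, scalar_apply]
  rw [eval_charpoly, this, det_aeval_eq_prod_roots_charpoly, eval_multiset_prod, Multiset.map_map]
  simp

theorem trace_pow_eq_sum_roots_charpoly (A : Matrix ι ι K) (m : ℕ) :
    (A ^ m).trace = (A.charpoly.roots.map (· ^ m)).sum := by
  have h := charpoly_aeval_eq_prod_roots_charpoly A (X ^ m)
  simp only [aeval_X_pow, eval_pow, eval_X] at h
  rw [trace_eq_sum_roots_charpoly, h,
    ← roots_multiset_prod_X_sub_C (A.charpoly.roots.map (· ^ m)), Multiset.map_map]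
  rfl

theorem charpoly_eq_of_trace_pow_eq [CharZero K] {A B : Matrix ι ι K}
    (h : ∀ m, (A ^ m).trace = (B ^ m).trace) : A.charpoly = B.charpoly := by
  have hroots : A.charpoly.roots = B.charpoly.roots :=
    Multiset.eq_of_sum_map_pow_eq fun m => by simpa [trace_pow_eq_sum_roots_charpoly] using h m
  rw [charpoly_eq_prod_roots A, hroots, ← charpoly_eq_prod_roots B]

end Matrix

theorem stmt_4_general (n : ℕ) (L M : ℝ → Matrix (Fin n) (Fin n) ℂ)
    (hLax : ∀ (t : ℝ) (i j : Fin n),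
      HasDerivAt (fun s => L s i j) ((M t * L t - L t * M t) i j) t) :
    (∀ (m : ℕ) (t s : ℝ), Matrix.trace (L t ^ m) = Matrix.trace (L s ^ m)) ∧
    (∀ t s : ℝ, (L t).charpoly = (L s).charpoly) := by
  have htrace := Matrix.trace_pow_eq_of_lax hLax
  exact ⟨htrace, fun t s => Matrix.charpoly_eq_of_trace_pow_eq fun m => htrace m t s⟩

/-- the Lax equation `dL/dt = [M, L]` is an isospectral deformation:
all traces of powers of `L(t)`, and hence the characteristic polynomial of
`L(t)`, are constant in `t`. -/
theorem stmt_4 (n : ℕ) (hn : 1 ≤ n) (L M : ℝ → Matrix (Fin n) (Fin n) ℂ)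
    (hLax : ∀ (t : ℝ) (i j : Fin n),
      HasDerivAt (fun s => L s i j) ((M t * L t - L t * M t) i j) t) :
    (∀ (m : ℕ) (t s : ℝ), Matrix.trace (L t ^ m) = Matrix.trace (L s ^ m)) ∧
    (∀ t s : ℝ, (L t).charpoly = (L s).charpoly) :=
  stmt_4_general n L M hLax
end

section
/- Let N ≥ 2 and let ζ_1,…,ζ_N, r_1,…,r_N ∈ ℂ with ζ_1 + ζ_2 + … + ζ_N = 0. Define A_0(t) = 1 and A_k(t) = Σ_{1≤l_1<…<l_k≤N} (r_{l_1}⋯r_{l_k})² W(l_1,…,l_k)² exp(−2(ζ_{l_1}+…+ζ_{l_k})t), W(l_1,…,l_k) = Π_{p<s, p,s∈{l_1,…,l_k}}(2ζ_s − 2ζ_p). Let I ⊆ ℝ be an open interval on which A_k(t) ≠ 0 for all k = 1,…,N, let c ∈ ℂ, and let q_1,…,q_N : I → ℂ be twice differentiable functions satisfying exp(q_k(t) − c) = A_k(t)/A_{k−1}(t) for all t ∈ I and k = 1,…,N. Then q satisfies the complex Toda chain with fixed ends on I: d²q_k/dt² = exp(q_{k+1} − q_k) − exp(q_k − q_{k−1})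 for k = 1,…,N, where the term exp(q_{k+1} − q_k) is omitted for k = N and the term exp(q_k − q_{k−1}) is omitted for k = 1. -/
/-!
By Cauchy–Binet and the Vandermonde determinant, `A_k` is the `k × k` Hankel determinant
`det (H_{i+j})` of the moments `H_d = ∑_l r_l² e^{-2ζ_l t} (2ζ_l)^d`, and `-A_k'`, `A_k''` are
the Hankel determinants whose last row and/or column has its exponents raised by one. The
Desnanot–Jacobi identity for the `(k+1) × (k+1)` Hankel matrix then gives the Hirota equation
`A_k'' A_k - A_k'² = A_{k+1} A_{k-1}`. Since `q_k = c + log A_k - log A_{k-1}`, we get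
`q_k'' = (log A_k)'' - (log A_{k-1})''`, and Hirota turns `(log A_j)''` into
`A_{j+1} A_{j-1} / A_j² = exp (q_{j+1} - q_j)`; the boundary terms vanish because `A_0 = 1` and
`A_{N+1} = 0`.
-/

/-- The tau-functions of the complex Toda chain: `tauA N ζ r k t` is the sum over
all `k`-element subsets `{l_1 < … < l_k}` of `{1,…,N}` of
`(r_{l_1}⋯r_{l_k})² W(l_1,…,l_k)² exp(-2(ζ_{l_1}+…+ζ_{l_k}) t)`, where
`W(l_1,…,l_k) = ∏_{p<s} (2ζ_s - 2ζ_p)` is the Vandermonde determinant.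
In particular `tauA N ζ r 0 t = 1`. -/
noncomputable def tauA (N : ℕ) (ζ r : Fin N → ℂ) (k : ℕ) (t : ℝ) : ℂ :=
  ∑ s ∈ Finset.powersetCard k (Finset.univ : Finset (Fin N)),
    (∏ j ∈ s, r j) ^ 2 *
    (∏ p ∈ s, ∏ q ∈ s, if p < q then 2 * ζ q - 2 * ζ p else 1) ^ 2 *
    Complex.exp (-2 * (∑ j ∈ s, ζ j) * t)

open Finset Matrix Polynomial Filter Topology Complex

@[to_additive]
lemma Finset.prod_orderEmbOfFin {α M : Type*} [LinearOrder α] [CommMonoid M]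
    (s : Finset α) {k : ℕ} (h : s.card = k) (g : α → M) :
    ∏ i, g (s.orderEmbOfFin h i) = ∏ l ∈ s, g l := by
  conv_rhs => rw [← s.map_orderEmbOfFin_univ h, prod_map]
  rfl

lemma Finset.range_orderEmbOfFin_comp_perm {α : Type*} [LinearOrder α] (s : Finset α) {k : ℕ}
    (h : s.card = k) (σ : Equiv.Perm (Fin k)) : Set.range (s.orderEmbOfFin h ∘ σ) = s := by
  rw [Set.range_comp, σ.range_eq_univ, Set.image_univ, range_orderEmbOfFin]

section CauchyBinet

variable {ι : Type*} [Fintype ι] [LinearOrder ι] {R : Type*} [CommRing R]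

/-- An injective `k`-tuple is the increasing enumeration of its image composed with a
unique permutation. -/
lemma sum_injective_eq_sum_card_eq_sum_perm {k : ℕ} {M : Type*} [AddCommMonoid M]
    (F : (Fin k → ι) → M) :
    ∑ r : Fin k → ι with Function.Injective r, F r =
      ∑ s : {s : Finset ι // s.card = k}, ∑ σ : Equiv.Perm (Fin k),
        F (s.1.orderEmbOfFin s.2 ∘ σ) := by
  rw [Finset.sum_subtype _ (p := Function.Injective) (by simp)]
  refine (Fintype.sum_bijective (κ := {r : Fin k → ι // Function.Injective r})
    (ι := (s : {s : Finset ι // s.card = k}) × Equiv.Perm (Fin k))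
    (fun x => ⟨x.1.1.orderEmbOfFin x.1.2 ∘ x.2,
      (x.1.1.orderEmbOfFin x.1.2).injective.comp x.2.injective⟩)
    ⟨?_, ?_⟩ _ (fun r => F r.1) fun _ => rfl).symm.trans (Fintype.sum_sigma _)
  · rintro ⟨⟨s, hs⟩, σ⟩ ⟨⟨s', hs'⟩, σ'⟩ heq
    have hr := congrArg Subtype.val heq
    obtain rfl : s = s' := by
      exact_mod_cast (s.range_orderEmbOfFin_comp_perm hs σ).symm.trans
        ((congrArg Set.range hr).trans (s'.range_orderEmbOfFin_comp_perm hs' σ'))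
    obtain rfl : σ = σ' := Equiv.ext fun i => (s.orderEmbOfFin hs).injective (congrFun hr i)
    rfl
  · rintro ⟨r, hr⟩
    have hcard : (univ.image r).card = k := by simp [card_image_of_injective _ hr]
    let e := (univ.image r).orderIsoOfFin hcard
    let σ : Fin k → Fin k := fun i => e.symm ⟨r i, mem_image_of_mem r (mem_univ i)⟩
    have hσ : Function.Injective σ := fun i j hij =>
      hr (congrArg Subtype.val (e.symm.injective hij))
    refine ⟨⟨⟨_, hcard⟩, Equiv.ofBijective σ (Finite.injective_iff_bijective.mp hσ)⟩, ?_⟩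
    ext i
    exact congrArg Subtype.val (e.apply_symm_apply _)

omit [LinearOrder ι] in
lemma Matrix.det_mul_eq_sum_prod_mul_det_submatrix {k : ℕ} (A : Matrix (Fin k) ι R)
    (B : Matrix ι (Fin k) R) :
    (A * B).det = ∑ r : Fin k → ι, (∏ i, A i (r i)) * (B.submatrix r id).det := by
  have hrows : A * B = fun i => ∑ l, A i l • B l := by
    ext i j
    simp [Matrix.mul_apply, Finset.sum_apply]
  rw [hrows]
  change detRowAlternating.toMultilinearMap _ = _
  rw [MultilinearMap.map_sum]
  refine sum_congr rfl fun r _ => ?_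
  rw [MultilinearMap.map_smul_univ, smul_eq_mul]
  rfl

theorem Matrix.det_mul_eq_sum_det_submatrix {k : ℕ} (A : Matrix (Fin k) ι R)
    (B : Matrix ι (Fin k) R) :
    (A * B).det = ∑ s : {s : Finset ι // s.card = k},
      (A.submatrix id (s.1.orderEmbOfFin s.2)).det *
        (B.submatrix (s.1.orderEmbOfFin s.2) id).det := by
  have hvanish (r : Fin k → ι) (hr : ¬ Function.Injective r) : (B.submatrix r id).det = 0 := by
    obtain ⟨i, j, hij, hne⟩ : ∃ i j, r i = r j ∧ i ≠ j := by
      simpa [Function.Injective] using hr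
    exact det_zero_of_row_eq hne (by ext; simp [hij])
  rw [det_mul_eq_sum_prod_mul_det_submatrix,
    ← sum_filter_of_ne fun r _ h => by_contra fun hr => h (by rw [hvanish r hr, mul_zero]),
    sum_injective_eq_sum_card_eq_sum_perm]
  refine sum_congr rfl fun s _ => ?_
  set e := s.1.orderEmbOfFin s.2
  have hperm (σ : Equiv.Perm (Fin k)) :
      (B.submatrix (e ∘ σ) id).det = Equiv.Perm.sign σ * (B.submatrix e id).det :=
    det_permute σ (B.submatrix e id)
  simp_rw [hperm]
  rw [← det_transpose (A.submatrix id e), det_apply (A.submatrix id e)ᵀ, sum_mul]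
  refine sum_congr rfl fun σ _ => ?_
  simp only [Units.smul_def, transpose_apply, submatrix_apply, id, zsmul_eq_mul,
    Function.comp_apply]
  ring

end CauchyBinet

section Vandermonde

variable {R : Type*} [CommRing R]

def lastShift (n a : ℕ) (j : Fin (n + 1)) : ℕ := if j = Fin.last n then n + a else j

lemma lastShift_zero (n : ℕ) : lastShift n 0 = Fin.val := by
  ext j
  unfold lastShift
  split_ifs with h <;> simp [h]

lemma pow_succ_eq_sum_coeff_prod_X_sub_C [Nontrivial R] {n : ℕ} (v : Fin (n + 1) → R)
    (i : Fin (n + 1)) :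
    v i ^ (n + 1) = ∑ j : Fin (n + 1), -(∏ l, (X - C (v l))).coeff j * v i ^ (j : ℕ) := by
  set Q := ∏ l, (X - C (v l))
  have hmonic : Q.Monic := monic_prod_of_monic _ _ fun l _ => monic_X_sub_C (v l)
  have hdeg : Q.natDegree = n + 1 := by
    rw [natDegree_prod_of_monic _ _ fun l _ => monic_X_sub_C (v l)]
    simp
  have hroot : Q.eval (v i) = 0 := by
    rw [eval_prod]
    exact prod_eq_zero (mem_univ i) (by simp)
  rw [hmonic.as_sum, hdeg, eval_add, eval_pow, eval_X, eval_finsetSum] at hroot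
  simp only [eval_mul, eval_C, eval_pow, eval_X] at hroot
  rw [Fin.sum_univ_eq_sum_range (fun d => -Q.coeff d * v i ^ d)]
  simp only [neg_mul, sum_neg_distrib]
  exact eq_neg_of_add_eq_zero_left hroot

/-- The top coefficient `-(v_0 + ⋯ + v_n)` of `∏ (X - v_l)` below `X^{n+1}` is what survives
when the last column `v_i^{n+1}` is reduced modulo the Vandermonde columns. -/
lemma det_pow_lastShift_one {n : ℕ} (v : Fin (n + 1) → R) :
    (of fun i j => v i ^ lastShift n 1 j).det = (∑ i, v i) * (vandermonde v).det := by
  nontriviality R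
  set Q := ∏ l, (X - C (v l))
  have hcoeff : Q.coeff n = -∑ i, v i := by
    simpa using prod_X_sub_C_coeff_card_pred (univ : Finset (Fin (n + 1))) v (by simp)
  have hcol : (of fun i j => v i ^ lastShift n 1 j) = (vandermonde v).updateCol (Fin.last n)
      fun i => ∑ j : Fin (n + 1), (-Q.coeff j) • vandermonde v i j := by
    ext i j
    by_cases hj : j = Fin.last n
    · simp [hj, lastShift, vandermonde_apply, pow_succ_eq_sum_coeff_prod_X_sub_C v i, Q]
    · simp [hj, lastShift, vandermonde_apply]
  rw [hcol, det_updateCol_sum, Fin.val_last, hcoeff, neg_neg, smul_eq_mul]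

lemma det_pow_lastShift {n a : ℕ} (v : Fin (n + 1) → R) (ha : a ≤ 1) :
    (of fun i j => v i ^ lastShift n a j).det = (∑ i, v i) ^ a * (vandermonde v).det := by
  interval_cases a
  · simp [lastShift_zero, vandermonde]
  · simp [det_pow_lastShift_one]

lemma Matrix.det_vandermonde_comp_orderEmbOfFin {ι : Type*} [LinearOrder ι] (μ : ι → R)
    (s : Finset ι) {k : ℕ} (h : s.card = k) :
    (vandermonde (μ ∘ s.orderEmbOfFin h)).det
      = ∏ p ∈ s, ∏ q ∈ s, if p < q then μ q - μ p else 1 := by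
  rw [det_vandermonde, ← prod_orderEmbOfFin s h]
  refine prod_congr rfl fun i _ => ?_
  rw [← prod_orderEmbOfFin s h, ← prod_filter]
  refine prod_congr (by ext; simp) fun j _ => ?_
  simp

end Vandermonde

section DesnanotJacobi

variable {R : Type*} [CommRing R] {m : Type*} [Fintype m] [DecidableEq m]

def Matrix.borderMinor (M : Matrix (m ⊕ Fin 2) (m ⊕ Fin 2) R) (a b : Fin 2) :
    Matrix (m ⊕ Fin 1) (m ⊕ Fin 1) R :=
  M.submatrix (Sum.map id fun _ => a) (Sum.map id fun _ => b)

lemma Matrix.det_borderMinor (M : Matrix (m ⊕ Fin 2) (m ⊕ Fin 2) R) [Invertible M.toBlocks₁₁]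
    (a b : Fin 2) :
    (M.borderMinor a b).det =
      M.toBlocks₁₁.det * (M.toBlocks₂₂ - M.toBlocks₂₁ * ⅟M.toBlocks₁₁ * M.toBlocks₁₂) a b := by
  have hblocks : M.borderMinor a b =
      fromBlocks M.toBlocks₁₁ (M.toBlocks₁₂.submatrix id fun _ => b)
        (M.toBlocks₂₁.submatrix (fun _ => a) id)
        (M.toBlocks₂₂.submatrix (fun _ => a) fun _ => b) := by
    ext (i | i) (j | j) <;> rfl
  rw [hblocks, det_fromBlocks₁₁, det_unique (n := Fin 1)]
  simp [Matrix.mul_apply]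

/-- The Desnanot–Jacobi identity: both sides are `det A ^ 2` times the determinant of the
`2 × 2` Schur complement of `A = M.toBlocks₁₁`. -/
theorem Matrix.det_mul_det_toBlocks₁₁ (M : Matrix (m ⊕ Fin 2) (m ⊕ Fin 2) R)
    (hM : IsUnit M.toBlocks₁₁.det) :
    M.det * M.toBlocks₁₁.det = (M.borderMinor 0 0).det * (M.borderMinor 1 1).det
      - (M.borderMinor 0 1).det * (M.borderMinor 1 0).det := by
  have := M.toBlocks₁₁.invertibleOfIsUnitDet hM
  have hSchur := det_fromBlocks₁₁ M.toBlocks₁₁ M.toBlocks₁₂ M.toBlocks₂₁ M.toBlocks₂₂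
  rw [fromBlocks_toBlocks, det_fin_two] at hSchur
  simp only [hSchur, det_borderMinor]
  ring

end DesnanotJacobi

section Hankel

variable {ι : Type*} [Fintype ι] [LinearOrder ι] {R : Type*} [CommRing R]

/-- With weights `y_l = r_l² e^{-2ζ_l t}` and nodes `μ_l = 2ζ_l`, the values `c = 0, 1, 2` are
`A_k`, `-A_k'` and `A_k''`. -/
def vandermondeSqSum (y μ : ι → R) (k c : ℕ) : R :=
  ∑ s ∈ powersetCard k univ, (∏ l ∈ s, y l) * (∑ l ∈ s, μ l) ^ c *
    (∏ p ∈ s, ∏ q ∈ s, if p < q then μ q - μ p else 1) ^ 2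

lemma det_moment_eq_vandermondeSqSum (y μ : ι → R) {k : ℕ} (e f : Fin k → ℕ) (a b : ℕ)
    (he : ∀ v : Fin k → R, (of fun i j => v i ^ e j).det = (∑ i, v i) ^ a * (vandermonde v).det)
    (hf : ∀ v : Fin k → R, (of fun i j => v i ^ f j).det = (∑ i, v i) ^ b * (vandermonde v).det) :
    (of fun i j => ∑ l, y l * μ l ^ (e i + f j)).det = vandermondeSqSum y μ k (a + b) := by
  have hmul : (of fun i j => ∑ l, y l * μ l ^ (e i + f j))
      = (of fun i l => μ l ^ e i) * (of fun l j => y l * μ l ^ f j) := by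
    ext i j
    simp only [of_apply, mul_apply, pow_add]
    exact sum_congr rfl fun l _ => by ring
  rw [hmul, det_mul_eq_sum_det_submatrix, vandermondeSqSum,
    sum_subtype _ (p := fun s : Finset ι => s.card = k) (by simp)]
  refine sum_congr rfl fun s _ => ?_
  set emb := s.1.orderEmbOfFin s.2
  have hleft : ((of fun i l => μ l ^ e i).submatrix id emb).det
      = (∑ l ∈ s.1, μ l) ^ a * (∏ p ∈ s.1, ∏ q ∈ s.1, if p < q then μ q - μ p else 1) := by
    calc _ = (of fun i j => (μ ∘ emb) i ^ e j).det := by rw [← det_transpose]; rfl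
      _ = _ := by
        rw [he, det_vandermonde_comp_orderEmbOfFin]
        simp only [emb, Function.comp_apply, sum_orderEmbOfFin]
  have hright : ((of fun l j => y l * μ l ^ f j).submatrix emb id).det
      = (∏ l ∈ s.1, y l) * ((∑ l ∈ s.1, μ l) ^ b *
        (∏ p ∈ s.1, ∏ q ∈ s.1, if p < q then μ q - μ p else 1)) := by
    calc _ = (of fun i j => (y ∘ emb) i * of (fun i j => (μ ∘ emb) i ^ f j) i j).det := rfl
      _ = _ := by
        rw [det_mul_column, hf, det_vandermonde_comp_orderEmbOfFin]
        simp only [emb, Function.comp_apply, prod_orderEmbOfFin, sum_orderEmbOfFin]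
  rw [hleft, hright]
  ring

lemma det_hankel_eq_vandermondeSqSum (y μ : ι → R) (k : ℕ) :
    (of fun i j : Fin k => ∑ l, y l * μ l ^ ((i : ℕ) + j)).det = vandermondeSqSum y μ k 0 :=
  have hvandermonde (v : Fin k → R) :
      (of fun i j : Fin k => v i ^ (j : ℕ)).det = (∑ i, v i) ^ 0 * (vandermonde v).det := by
    rw [pow_zero, one_mul]
    rfl
  det_moment_eq_vandermondeSqSum y μ Fin.val Fin.val 0 0 hvandermonde hvandermonde

lemma det_hankel_lastShift_eq_vandermondeSqSum (y μ : ι → R) (n : ℕ) {a b : ℕ} (ha : a ≤ 1)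
    (hb : b ≤ 1) :
    (of fun i j : Fin (n + 1) => ∑ l, y l * μ l ^ (lastShift n a i + lastShift n b j)).det
      = vandermondeSqSum y μ (n + 1) (a + b) :=
  det_moment_eq_vandermondeSqSum y μ _ _ a b (fun v => det_pow_lastShift v ha)
    (fun v => det_pow_lastShift v hb)

theorem vandermondeSqSum_hirota (y μ : ι → R) (n : ℕ)
    (hn : IsUnit (vandermondeSqSum y μ n 0)) :
    vandermondeSqSum y μ (n + 1) 2 * vandermondeSqSum y μ (n + 1) 0
      - vandermondeSqSum y μ (n + 1) 1 ^ 2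
      = vandermondeSqSum y μ (n + 2) 0 * vandermondeSqSum y μ n 0 := by
  set H : ℕ → R := fun d => ∑ l, y l * μ l ^ d
  set M := (of fun i j : Fin (n + 2) => H (i + j)).submatrix finSumFinEquiv finSumFinEquiv
  have hM : M.det = vandermondeSqSum y μ (n + 2) 0 := by
    rw [det_submatrix_equiv_self, ← det_hankel_eq_vandermondeSqSum]
  have hM₁₁ : M.toBlocks₁₁.det = vandermondeSqSum y μ n 0 := by
    rw [← det_hankel_eq_vandermondeSqSum]
    rfl
  have hminor (a b : Fin 2) :
      (M.borderMinor a b).det = vandermondeSqSum y μ (n + 1) (a + b) := by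
    rw [← det_hankel_lastShift_eq_vandermondeSqSum y μ n (Nat.le_of_lt_succ a.2)
      (Nat.le_of_lt_succ b.2), ← det_submatrix_equiv_self finSumFinEquiv]
    have hlt (i : Fin n) : (i : ℕ) ≠ n := i.isLt.ne
    congr 1
    ext (i | i) (j | j) <;> simp [M, H, borderMinor, lastShift, Fin.ext_iff, hlt]
  have hDJ := M.det_mul_det_toBlocks₁₁ (hM₁₁ ▸ hn)
  simp only [hM, hM₁₁, hminor, Fin.isValue, Fin.val_zero, Fin.val_one, add_zero,
    Nat.reduceAdd] at hDJ
  linear_combination -hDJ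

end Hankel

lemma tauA_zero (N : ℕ) (ζ r : Fin N → ℂ) (t : ℝ) : tauA N ζ r 0 t = 1 := by
  simp [tauA]

lemma tauA_eq_zero_of_lt (N : ℕ) (ζ r : Fin N → ℂ) {k : ℕ} (hk : N < k) (t : ℝ) :
    tauA N ζ r k t = 0 := by
  rw [tauA, powersetCard_eq_empty.mpr (by simpa using hk), sum_empty]

lemma prod_mul_exp_neg_mul {ι : Type*} (s : Finset ι) (x μ : ι → ℂ) (t : ℂ) :
    ∏ l ∈ s, x l * exp (-(μ l * t)) = (∏ l ∈ s, x l) * exp (-((∑ l ∈ s, μ l) * t)) := by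
  rw [prod_mul_distrib, ← exp_sum, sum_mul, ← sum_neg_distrib]

lemma hasDerivAt_vandermondeSqSum_exp {ι : Type*} [Fintype ι] [LinearOrder ι] (x μ : ι → ℂ)
    (k c : ℕ) (t : ℝ) :
    HasDerivAt (fun t : ℝ => vandermondeSqSum (fun l => x l * exp (-(μ l * t))) μ k c)
      (-vandermondeSqSum (fun l => x l * exp (-(μ l * t))) μ k (c + 1)) t := by
  simp only [vandermondeSqSum, prod_mul_exp_neg_mul, ← sum_neg_distrib]
  refine HasDerivAt.fun_sum fun s _ => ?_
  have hexp : HasDerivAt (fun t : ℝ => exp (-((∑ l ∈ s, μ l) * t)))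
      (exp (-((∑ l ∈ s, μ l) * t)) * -(∑ l ∈ s, μ l)) t := by
    simpa using ((hasDerivAt_id (t : ℂ)).const_mul (-(∑ l ∈ s, μ l))).cexp.comp_ofReal
  refine (((hexp.const_mul (∏ l ∈ s, x l)).mul_const ((∑ l ∈ s, μ l) ^ c *
    (∏ p ∈ s, ∏ q ∈ s, if p < q then μ q - μ p else 1) ^ 2)).congr_deriv ?_).congr_of_eventuallyEq
    (Eventually.of_forall fun u => ?_)
  · ring
  · ring

lemma tauA_eq_vandermondeSqSum (N : ℕ) (ζ r : Fin N → ℂ) (k : ℕ) (t : ℝ) :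
    tauA N ζ r k t
      = vandermondeSqSum (fun l => r l ^ 2 * exp (-(2 * ζ l * t))) (fun l => 2 * ζ l) k 0 := by
  simp only [tauA, vandermondeSqSum, prod_mul_exp_neg_mul, prod_pow, pow_zero, mul_one]
  refine sum_congr rfl fun s _ => ?_
  rw [← mul_sum, show (-2 * ∑ j ∈ s, ζ j) * (t : ℂ) = -((2 * ∑ j ∈ s, ζ j) * t) by ring]
  ring

lemma HasDerivAt.eq_sub_div_of_cexp_sub_eq_div {f u v : ℝ → ℂ} {f' u' v' c : ℂ} {t : ℝ}
    (hf : HasDerivAt f f' t) (hu : HasDerivAt u u' t) (hv : HasDerivAt v v' t)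
    (hfuv : (fun s => cexp (f s - c)) =ᶠ[𝓝 t] fun s => u s / v s) (hu₀ : u t ≠ 0)
    (hv₀ : v t ≠ 0) :
    f' = u' / u t - v' / v t := by
  have hderiv :=
    ((hf.sub_const c).cexp.congr_of_eventuallyEq hfuv.symm).unique (hu.fun_div hv hv₀)
  rw [show cexp (f t - c) = u t / v t from hfuv.eq_of_nhds] at hderiv
  field_simp at hderiv ⊢
  linear_combination hderiv

lemma secondDeriv_eq_of_cexp_sub_eq_div {I : Set ℝ} (hI : IsOpen I) {c : ℂ}
    {f f' f'' u u' u'' v v' v'' : ℝ → ℂ}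
    (hf' : ∀ t ∈ I, HasDerivAt f (f' t) t) (hf'' : ∀ t ∈ I, HasDerivAt f' (f'' t) t)
    (hu' : ∀ t, HasDerivAt u (u' t) t) (hu'' : ∀ t, HasDerivAt u' (u'' t) t)
    (hv' : ∀ t, HasDerivAt v (v' t) t) (hv'' : ∀ t, HasDerivAt v' (v'' t) t)
    (hfuv : ∀ t ∈ I, cexp (f t - c) = u t / v t) (hu₀ : ∀ t ∈ I, u t ≠ 0)
    (hv₀ : ∀ t ∈ I, v t ≠ 0) {t : ℝ} (ht : t ∈ I) :
    f'' t = (u'' t * u t - u' t ^ 2) / u t ^ 2 - (v'' t * v t - v' t ^ 2) / v t ^ 2 := by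
  have hf'_eq : ∀ s ∈ I, f' s = u' s / u s - v' s / v s := fun s hs =>
    (hf' s hs).eq_sub_div_of_cexp_sub_eq_div (hu' s) (hv' s)
      (eventually_of_mem (hI.mem_nhds hs) hfuv) (hu₀ s hs) (hv₀ s hs)
  have hlogDeriv := ((hu'' t).div (hu' t) (hu₀ t ht)).sub ((hv'' t).div (hv' t) (hv₀ t ht))
  refine (hf'' t ht).unique ((hlogDeriv.congr_deriv ?_).congr_of_eventuallyEq
    (eventually_of_mem (hI.mem_nhds ht) hf'_eq))
  ring

theorem toda_of_hirota {N : ℕ} {I : Set ℝ} (hI : IsOpen I) {a a' a'' : ℕ → ℝ → ℂ}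
    (ha' : ∀ k t, HasDerivAt (a k) (a' k t) t) (ha'' : ∀ k t, HasDerivAt (a' k) (a'' k t) t)
    (ha₀ : a 0 = 1) (haN : a (N + 1) = 0) (hne : ∀ k ≤ N, ∀ t ∈ I, a k t ≠ 0)
    (hirota : ∀ k < N, ∀ t ∈ I,
      a'' (k + 1) t * a (k + 1) t - a' (k + 1) t ^ 2 = a (k + 2) t * a k t)
    (c : ℂ) (q q' q'' : ℝ → Fin N → ℂ)
    (hq' : ∀ (k : Fin N), ∀ t ∈ I, HasDerivAt (fun s => q s k) (q' t k) t)
    (hq'' : ∀ (k : Fin N), ∀ t ∈ I, HasDerivAt (fun s => q' s k) (q'' t k) t)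
    (hq : ∀ t ∈ I, ∀ k : Fin N, cexp (q t k - c) = a ((k : ℕ) + 1) t / a (k : ℕ) t) :
    ∀ t ∈ I, ∀ k : Fin N,
      q'' t k =
        (if h : (k : ℕ) + 1 < N then Complex.exp (q t ⟨(k : ℕ) + 1, h⟩ - q t k) else 0)
        - (if 0 < (k : ℕ) then
            Complex.exp (q t k -
              q t ⟨(k : ℕ) - 1, Nat.lt_of_le_of_lt (Nat.sub_le _ _) k.isLt⟩)
          else 0) := by
  intro t ht k
  have ha₀' : a' 0 = 0 :=
    funext fun t => (ha' 0 t).unique (by rw [ha₀]; exact hasDerivAt_const t 1)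
  have ha₀'' : a'' 0 = 0 :=
    funext fun t => (ha'' 0 t).unique (by rw [ha₀']; exact hasDerivAt_const t 0)
  have hhirota (j : ℕ) (hj : j < N) : (a'' (j + 1) t * a (j + 1) t - a' (j + 1) t ^ 2)
      / a (j + 1) t ^ 2 = a (j + 2) t * a j t / a (j + 1) t ^ 2 := by
    rw [hirota j hj t ht]
  have hexp (i j : Fin N) :
      cexp (q t i - q t j) = a (i + 1) t / a i t / (a (j + 1) t / a j t) := by
    rw [← hq t ht i, ← hq t ht j, ← exp_sub, sub_sub_sub_cancel_right]
  rw [secondDeriv_eq_of_cexp_sub_eq_div hI (hq' k) (hq'' k) (ha' _) (ha'' _) (ha' _) (ha'' _)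
    (fun s hs => hq s hs k) (fun s hs => hne _ k.isLt s hs) (fun s hs => hne _ k.isLt.le s hs) ht,
    hhirota k k.isLt]
  congr 1
  · split_ifs with hk
    · have hnext := hne (k + 2) hk t ht
      rw [hexp]
      field_simp
    · rw [show (k : ℕ) + 2 = N + 1 by omega, haN]
      simp
  · split_ifs with hk
    · have hk1 : (k : ℕ) - 1 + 1 = k := Nat.sub_add_cancel hk
      have hprev := hne (k - 1) (by omega) t ht
      have hcur := hne k k.isLt.le t ht
      have hT := hhirota (k - 1) (by omega)
      rw [hk1, show (k : ℕ) - 1 + 2 = k + 1 by omega] at hT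
      rw [hT, hexp]
      simp only [hk1]
      field_simp
    · simp [show (k : ℕ) = 0 by omega, ha₀, ha₀', ha₀'']

theorem stmt_6_general (N : ℕ) (ζ r : Fin N → ℂ)
    (I : Set ℝ) (hIopen : IsOpen I)
    (hA : ∀ k : ℕ, 1 ≤ k → k ≤ N → ∀ t ∈ I, tauA N ζ r k t ≠ 0)
    (c : ℂ) (q q' q'' : ℝ → Fin N → ℂ)
    (hq' : ∀ (k : Fin N), ∀ t ∈ I, HasDerivAt (fun s => q s k) (q' t k) t)
    (hq'' : ∀ (k : Fin N), ∀ t ∈ I, HasDerivAt (fun s => q' s k) (q'' t k) t)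
    (hq : ∀ t ∈ I, ∀ k : Fin N,
      Complex.exp (q t k - c) = tauA N ζ r ((k : ℕ) + 1) t / tauA N ζ r (k : ℕ) t) :
    ∀ t ∈ I, ∀ k : Fin N,
      q'' t k =
        (if h : (k : ℕ) + 1 < N then Complex.exp (q t ⟨(k : ℕ) + 1, h⟩ - q t k) else 0)
        - (if 0 < (k : ℕ) then
            Complex.exp (q t k -
              q t ⟨(k : ℕ) - 1, Nat.lt_of_le_of_lt (Nat.sub_le _ _) k.isLt⟩)
          else 0) := by
  set y : ℝ → Fin N → ℂ := fun t l => r l ^ 2 * exp (-(2 * ζ l * t))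
  set μ : Fin N → ℂ := fun l => 2 * ζ l
  have hτ (k : ℕ) : tauA N ζ r k = fun t => vandermondeSqSum (y t) μ k 0 :=
    funext (tauA_eq_vandermondeSqSum N ζ r k)
  have hA₀ : ∀ k ≤ N, ∀ t ∈ I, tauA N ζ r k t ≠ 0 := fun k hk t ht => by
    rcases Nat.eq_zero_or_pos k with rfl | hk₀
    · simp [tauA_zero]
    · exact hA k hk₀ hk t ht
  refine toda_of_hirota hIopen (a' := fun k t => -vandermondeSqSum (y t) μ k 1)
    (a'' := fun k t => vandermondeSqSum (y t) μ k 2) (fun k t => ?_) (fun k t => ?_)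
    (funext (tauA_zero N ζ r)) (funext (tauA_eq_zero_of_lt N ζ r N.lt_succ_self)) hA₀
    (fun k hk t ht => ?_) c q q' q'' hq' hq'' hq
  · rw [hτ]
    exact hasDerivAt_vandermondeSqSum_exp _ μ k 0 t
  · simpa using (hasDerivAt_vandermondeSqSum_exp _ μ k 1 t).fun_neg
  · have hunit : IsUnit (vandermondeSqSum (y t) μ k 0) := by
      rw [← tauA_eq_vandermondeSqSum]
      exact (hA₀ k hk.le t ht).isUnit
    simp only [hτ]
    linear_combination vandermondeSqSum_hirota (y t) μ k hunit

/-- if `exp(q_k - c) = A_k / A_{k-1}` on an open interval (an open,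
order-connected subset of `ℝ`) where all the tau-functions `A_1, …, A_N` are
nonvanishing, and `ζ_1 + … + ζ_N = 0`, then `q` solves the complex Toda chain
with fixed ends there.  (The index `k : Fin N` is 0-based: `q t k` is the
paper's `q_{k+1}(t)`.) -/
theorem stmt_6 (N : ℕ) (hN : 2 ≤ N) (ζ r : Fin N → ℂ)
    (htrace : ∑ j, ζ j = 0)
    (I : Set ℝ) (hIopen : IsOpen I) (hIconn : I.OrdConnected)
    (hA : ∀ k : ℕ, 1 ≤ k → k ≤ N → ∀ t ∈ I, tauA N ζ r k t ≠ 0)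
    (c : ℂ) (q q' q'' : ℝ → Fin N → ℂ)
    (hq' : ∀ (k : Fin N), ∀ t ∈ I, HasDerivAt (fun s => q s k) (q' t k) t)
    (hq'' : ∀ (k : Fin N), ∀ t ∈ I, HasDerivAt (fun s => q' s k) (q'' t k) t)
    (hq : ∀ t ∈ I, ∀ k : Fin N,
      Complex.exp (q t k - c) = tauA N ζ r ((k : ℕ) + 1) t / tauA N ζ r (k : ℕ) t) :
    ∀ t ∈ I, ∀ k : Fin N,
      q'' t k =
        (if h : (k : ℕ) + 1 < N then Complex.exp (q t ⟨(k : ℕ) + 1, h⟩ - q t k) else 0)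
        - (if 0 < (k : ℕ) then
            Complex.exp (q t k -
              q t ⟨(k : ℕ) - 1, Nat.lt_of_le_of_lt (Nat.sub_le _ _) k.isLt⟩)
          else 0) :=
  stmt_6_general N ζ r I hIopen hA c q q' q'' hq' hq'' hq
end

section
/- Let N ≥ 1 and ζ_1,…,ζ_N, r_1,…,r_N ∈ ℂ with Re ζ_1 < Re ζ_2 < … < Re ζ_N, and fix k with 1 ≤ k ≤ N. Assume r_j ≠ 0 for j = 1,…,k−1. Define A_0(t) = 1 and A_k(t) = Σ_{1≤l_1<…<l_k≤N} (r_{l_1}⋯r_{l_k})² W(l_1,…,l_k)² exp(−2(ζ_{l_1}+…+ζ_{l_k})t) with W(l_1,…,l_k) = Π_{p<s, p,s∈{l_1,…,l_k}}(2ζ_s − 2ζ_p). Then lim_{t→+∞} exp(2ζ_k t) · A_k(t)/A_{k−1}(t) = r_k² · Π_{s=1}^{k−1} (2ζ_s − 2ζ_k)². (This is the statement that q_k(t) + 2ζ_k t tends to β_k^+ = q_1(0) + ln r_k² + ln Π_{s=1}^{k−1}(2ζ_s − 2ζ_k)² as t → +∞, written in exponentiated form.) -/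
/-!
Write `A_m(t) = ∑_{|s| = m} c_s exp(-2 (∑_{j ∈ s} ζ_j) t)`. Since `Re ζ` is strictly increasing,
among all `m`-element index sets the initial segment `{1,…,m}` has strictly the smallest
`∑ Re ζ_j`, so `exp(2 (ζ_1 + … + ζ_m) t) A_m(t) → c_{{1,…,m}}`. The sets for `m = k` and
`m = k - 1` differ only by `k`, so the ratio of the two limits is `r_k² ∏_{s<k} (2ζ_s - 2ζ_k)²`,
and the limit for `m = k - 1` is nonzero because `r_1, …, r_{k-1} ≠ 0` and the `ζ_j` are distinct.
-/

open Filter Finset Topology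

theorem Complex.tendsto_exp_mul_ofReal_atTop_nhds_zero {c : ℂ} (hc : c.re < 0) :
    Tendsto (fun t : ℝ => Complex.exp (c * t)) atTop (𝓝 0) := by
  rw [Complex.tendsto_exp_nhds_zero_iff]
  simp only [Complex.re_mul_ofReal]
  exact (tendsto_const_mul_atBot_of_neg hc).mpr tendsto_id

theorem tendsto_cexp_mul_sum_cexp_neg {ι : Type*} [DecidableEq ι] {s : Finset ι} {i₀ : ι}
    (hi₀ : i₀ ∈ s) (c e : ι → ℂ) (he : ∀ i ∈ s, i ≠ i₀ → (e i₀).re < (e i).re) :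
    Tendsto (fun t : ℝ => Complex.exp (e i₀ * t) * ∑ i ∈ s, c i * Complex.exp (-e i * t))
      atTop (𝓝 (c i₀)) := by
  have hterm : ∀ i ∈ s, Tendsto (fun t : ℝ => c i * Complex.exp ((e i₀ - e i) * t))
      atTop (𝓝 (if i = i₀ then c i else 0)) := by
    intro i hi
    split_ifs with h
    · simp [h]
    · simpa using (Complex.tendsto_exp_mul_ofReal_atTop_nhds_zero
        (by simpa using he i hi h)).const_mul (c i)
  convert tendsto_finsetSum s hterm using 1
  · ext t
    rw [mul_sum]
    refine sum_congr rfl fun i _ => ?_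
    rw [mul_left_comm, ← Complex.exp_add]
    ring_nf
  · rw [sum_ite_eq', if_pos hi₀]

theorem Finset.sum_lt_sum_of_card_eq_of_forall_lt {ι M : Type*} [AddCommMonoid M] [LinearOrder M]
    [IsOrderedCancelAddMonoid M] {A B : Finset ι} (f : ι → M) (hcard : #A = #B)
    (hA : A.Nonempty) (hlt : ∀ a ∈ A, ∀ b ∈ B, f a < f b) :
    ∑ a ∈ A, f a < ∑ b ∈ B, f b := by
  obtain ⟨a₀, ha₀, hmax⟩ := A.exists_max_image f hA
  have hB : B.Nonempty := card_pos.mp (hcard ▸ card_pos.mpr hA)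
  calc ∑ a ∈ A, f a ≤ #A • f a₀ := sum_le_card_nsmul A f _ hmax
    _ = ∑ _b ∈ B, f a₀ := by rw [sum_const, hcard]
    _ < ∑ b ∈ B, f b := sum_lt_sum_of_nonempty hB fun b hb => hlt a₀ ha₀ b hb

theorem Finset.sum_lt_sum_of_isLowerSet {ι M : Type*} [LinearOrder ι] [AddCommMonoid M]
    [LinearOrder M] [IsOrderedCancelAddMonoid M] {w : ι → M} (hw : StrictMono w)
    {S s : Finset ι} (hS : IsLowerSet (S : Set ι)) (hcard : #s = #S) (hne : s ≠ S) :
    ∑ j ∈ S, w j < ∑ j ∈ s, w j := by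
  classical
  have hdiff : (S \ s).Nonempty := by
    rw [nonempty_iff_ne_empty, Ne, sdiff_eq_empty_iff_subset]
    exact fun h => hne (eq_of_subset_of_card_le h hcard.le).symm
  have hlt : ∑ j ∈ S \ s, w j < ∑ j ∈ s \ S, w j :=
    sum_lt_sum_of_card_eq_of_forall_lt w (card_sdiff_comm hcard.symm) hdiff
      fun a ha b hb => hw <| lt_of_not_ge fun hba =>
        (mem_sdiff.mp hb).2 (hS hba (mem_sdiff.mp ha).1)
  rw [← sum_inter_add_sum_sdiff S s, ← sum_inter_add_sum_sdiff s S, inter_comm]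
  exact add_lt_add_right hlt _

section TauFunction

variable {ι : Type*} [LinearOrder ι]

noncomputable def tauVandermonde (ζ : ι → ℂ) (s : Finset ι) : ℂ :=
  ∏ p ∈ s, ∏ q ∈ s, if p < q then 2 * ζ q - 2 * ζ p else 1

noncomputable def tauCoeff (ζ r : ι → ℂ) (s : Finset ι) : ℂ :=
  (∏ j ∈ s, r j) ^ 2 * tauVandermonde ζ s ^ 2

theorem tauVandermonde_insert_of_forall_lt (ζ : ι → ℂ) {s : Finset ι} {k : ι}
    (hk : ∀ p ∈ s, p < k) :
    tauVandermonde ζ (insert k s) = (∏ p ∈ s, (2 * ζ k - 2 * ζ p)) * tauVandermonde ζ s := by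
  have hks : k ∉ s := fun h => lt_irrefl k (hk k h)
  have hrow : ∏ q ∈ insert k s, (if k < q then 2 * ζ q - 2 * ζ k else 1) = 1 :=
    prod_eq_one fun q hq => if_neg <| not_lt.mpr <| by
      rcases mem_insert.mp hq with rfl | hq
      exacts [le_rfl, (hk q hq).le]
  have hcol : ∀ p ∈ s, ∏ q ∈ insert k s, (if p < q then 2 * ζ q - 2 * ζ p else 1) =
      (2 * ζ k - 2 * ζ p) * ∏ q ∈ s, (if p < q then 2 * ζ q - 2 * ζ p else 1) := fun p hp => by
    rw [prod_insert hks, if_pos (hk p hp)]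
  rw [tauVandermonde, prod_insert hks, hrow, one_mul, prod_congr rfl hcol, prod_mul_distrib,
    tauVandermonde]

theorem tauVandermonde_ne_zero {ζ : ι → ℂ} (hζ : Function.Injective ζ) (s : Finset ι) :
    tauVandermonde ζ s ≠ 0 :=
  prod_ne_zero_iff.mpr fun p _ => prod_ne_zero_iff.mpr fun q _ => by
    split_ifs with hpq
    · rw [← mul_sub]
      exact mul_ne_zero two_ne_zero (sub_ne_zero.mpr (hζ.ne hpq.ne'))
    · exact one_ne_zero

theorem tauCoeff_ne_zero {ζ r : ι → ℂ} (hζ : Function.Injective ζ) {s : Finset ι}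
    (hr : ∀ j ∈ s, r j ≠ 0) : tauCoeff ζ r s ≠ 0 :=
  mul_ne_zero (pow_ne_zero _ (prod_ne_zero_iff.mpr hr))
    (pow_ne_zero _ (tauVandermonde_ne_zero hζ s))

theorem tauCoeff_insert_of_forall_lt (ζ r : ι → ℂ) {s : Finset ι} {k : ι}
    (hk : ∀ p ∈ s, p < k) :
    tauCoeff ζ r (insert k s) = r k ^ 2 * (∏ p ∈ s, (2 * ζ p - 2 * ζ k)) ^ 2 * tauCoeff ζ r s := by
  have hks : k ∉ s := fun h => lt_irrefl k (hk k h)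
  have hflip : (∏ p ∈ s, (2 * ζ k - 2 * ζ p)) ^ 2 = (∏ p ∈ s, (2 * ζ p - 2 * ζ k)) ^ 2 := by
    rw [← prod_pow, ← prod_pow]
    exact prod_congr rfl fun p _ => by ring
  rw [tauCoeff, tauCoeff, prod_insert hks, tauVandermonde_insert_of_forall_lt ζ hk, mul_pow,
    mul_pow, hflip]
  ring

end TauFunction

theorem tauA_eq_sum_tauCoeff (N : ℕ) (ζ r : Fin N → ℂ) (m : ℕ) (t : ℝ) :
    tauA N ζ r m t = ∑ s ∈ powersetCard m univ,
      tauCoeff ζ r s * Complex.exp (-(2 * ∑ j ∈ s, ζ j) * t) := by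
  simp only [tauA, tauCoeff, tauVandermonde, neg_mul]

theorem tendsto_cexp_mul_tauA {N : ℕ} {ζ : Fin N → ℂ} (r : Fin N → ℂ)
    (hζ : StrictMono fun j => (ζ j).re) {S : Finset (Fin N)} (hS : IsLowerSet (S : Set (Fin N))) :
    Tendsto (fun t : ℝ => Complex.exp (2 * (∑ j ∈ S, ζ j) * t) * tauA N ζ r #S t)
      atTop (𝓝 (tauCoeff ζ r S)) := by
  simp only [tauA_eq_sum_tauCoeff]
  refine tendsto_cexp_mul_sum_cexp_neg (mem_powersetCard.mpr ⟨subset_univ S, rfl⟩) _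
    (fun s => 2 * ∑ j ∈ s, ζ j) fun s hs hne => ?_
  simp only [Complex.mul_re, Complex.re_sum, Complex.im_sum, Complex.re_ofNat, Complex.im_ofNat,
    zero_mul, sub_zero]
  gcongr 2 * ?_
  exact sum_lt_sum_of_isLowerSet hζ hS (mem_powersetCard.mp hs).2 hne

/-- `k : Fin N` is 0-based: it is the paper's `k - 1`. -/
theorem stmt_8_general (N : ℕ) (ζ r : Fin N → ℂ)
    (hsort : ∀ i j : Fin N, (i : ℕ) < (j : ℕ) → (ζ i).re < (ζ j).re)
    (k : Fin N) (hr : ∀ j : Fin N, (j : ℕ) < (k : ℕ) → r j ≠ 0) :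
    Filter.Tendsto
      (fun t : ℝ =>
        Complex.exp (2 * ζ k * t) * (tauA N ζ r ((k : ℕ) + 1) t / tauA N ζ r (k : ℕ) t))
      Filter.atTop
      (nhds ((r k) ^ 2 *
        (∏ s ∈ Finset.univ.filter (fun s : Fin N => (s : ℕ) < (k : ℕ)),
          (2 * ζ s - 2 * ζ k)) ^ 2)) := by
  have hζ : StrictMono fun j => (ζ j).re := fun i j h => hsort i j h
  have hlt : ∀ p ∈ Iio k, p < k := fun p => mem_Iio.mp
  have hc : tauCoeff ζ r (Iio k) ≠ 0 :=
    tauCoeff_ne_zero (hζ.injective.of_comp) fun j hj => hr j (hlt j hj)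
  have hlim := (tendsto_cexp_mul_tauA r hζ (S := Iic k) (by simpa using isLowerSet_Iic k)).div
    (tendsto_cexp_mul_tauA r hζ (S := Iio k) (by simpa using isLowerSet_Iio k)) hc
  rw [Fin.card_Iic, Fin.card_Iio, ← Iio_insert, tauCoeff_insert_of_forall_lt ζ r hlt,
    mul_div_assoc, div_self hc, mul_one] at hlim
  have hIio : univ.filter (fun s : Fin N => (s : ℕ) < k) = Iio k := by
    ext j
    simp
  rw [hIio]
  refine hlim.congr fun t => ?_
  rw [Pi.div_apply, sum_insert (fun h => lt_irrefl k (hlt k h)), mul_add, add_mul,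
    Complex.exp_add, mul_assoc, mul_left_comm, mul_div_mul_left _ _ (Complex.exp_ne_zero _),
    mul_div_assoc]

/-- under the sorting condition `Re ζ_1 < … < Re ζ_N` and with
`r_1,…,r_{k-1} ≠ 0`, one has
`lim_{t→+∞} exp(2 ζ_k t) A_k(t)/A_{k-1}(t) = r_k² ∏_{s<k} (2ζ_s - 2ζ_k)²`
(the exponentiated form of `q_k(t) + 2ζ_k t → β_k⁺` as `t → +∞`).
Here `k : Fin N` is 0-based: it is the paper's `k - 1`. -/
theorem stmt_8 (N : ℕ) (hN : 1 ≤ N) (ζ r : Fin N → ℂ)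
    (hsort : ∀ i j : Fin N, (i : ℕ) < (j : ℕ) → (ζ i).re < (ζ j).re)
    (k : Fin N) (hr : ∀ j : Fin N, (j : ℕ) < (k : ℕ) → r j ≠ 0) :
    Filter.Tendsto
      (fun t : ℝ =>
        Complex.exp (2 * ζ k * t) * (tauA N ζ r ((k : ℕ) + 1) t / tauA N ζ r (k : ℕ) t))
      Filter.atTop
      (nhds ((r k) ^ 2 *
        (∏ s ∈ Finset.univ.filter (fun s : Fin N => (s : ℕ) < (k : ℕ)),
          (2 * ζ s - 2 * ζ k)) ^ 2)) :=
  stmt_8_general N ζ r hsort k hr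
end

section
/- Let N ≥ 1 and ζ_1,…,ζ_N, r_1,…,r_N ∈ ℂ with Re ζ_1 < Re ζ_2 < … < Re ζ_N, fix k with 1 ≤ k ≤ N, and write k̄ = N+1−k. Assume r_j ≠ 0 for j = k̄+1,…,N. Define A_0(t) = 1 and A_k(t) = Σ_{1≤l_1<…<l_k≤N} (r_{l_1}⋯r_{l_k})² W(l_1,…,l_k)² exp(−2(ζ_{l_1}+…+ζ_{l_k})t) with W(l_1,…,l_k) = Π_{p<s, p,s∈{l_1,…,l_k}}(2ζ_s − 2ζ_p). Then lim_{t→−∞} exp(2ζ_{k̄} t) · A_k(t)/A_{k−1}(t) = r_{k̄}² · Π_{s=k̄+1}^{N} (2ζ_s − 2ζ_{k̄})². (This is the statement that q_k(t) + 2ζ_{k̄} t tends to β_k^− = q_1(0) + ln r_{k̄}² + ln Π_{s=k̄+1}^{N}(2ζ_s − 2ζ_{k̄})² as t → −∞, written in exponentiated form; it expresses the 'sorting property' that the k-th particle moves with velocity −2ζ_{N+1−k} as t → −∞.) -/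
/-!
As `t → -∞` the term of `A_m(t)` indexed by `s` has modulus `exp(-2 t Σ_{j∈s} Re ζ_j)`, so the
sum is dominated by the `m`-subset maximising `Σ Re ζ_j`, which by the sorting condition is the
set of the `m` largest indices. Hence `exp(2 t Σ_{j>N-m} ζ_j) A_m(t)` tends to that subset's
coefficient. For `m = k` and `m = k+1` the two top subsets differ by `k̄` alone, so the
normalised ratio tends to the quotient of the two coefficients, which is
`r_{k̄}² Π_{s>k̄}(2ζ_s - 2ζ_{k̄})²`; the denominator is nonzero because the `r_j` with `j > k̄` are
nonzero and the `ζ_j` are distinct.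
-/

open Finset Filter Topology

theorem Finset.sum_lt_sum_of_isUpperSet {α M : Type*} [LinearOrder α] [AddCommMonoid M]
    [LinearOrder M] [IsOrderedCancelAddMonoid M] {g : α → M}
    (hg : StrictMono g) {s u : Finset α} (hu : IsUpperSet (u : Set α)) (hcard : #s = #u)
    (hne : s ≠ u) : ∑ i ∈ s, g i < ∑ i ∈ u, g i := by
  have hsep : ∀ a ∈ s \ u, ∀ b ∈ u \ s, a < b := fun a ha b hb =>
    lt_of_not_ge fun hba => (mem_sdiff.1 ha).2 (hu hba (mem_sdiff.1 hb).1)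
  have hus : (u \ s).Nonempty := by
    rw [nonempty_iff_ne_empty, Ne, sdiff_eq_empty_iff_subset]
    exact fun h => hne (eq_of_subset_of_card_le h hcard.le).symm
  have hsu : (s \ u).Nonempty := by
    rw [← card_pos, card_sdiff_comm hcard]; exact card_pos.2 hus
  set b₀ := (u \ s).min' hus
  calc ∑ i ∈ s, g i = ∑ i ∈ s ∩ u, g i + ∑ i ∈ s \ u, g i := (sum_inter_add_sum_sdiff _ _ _).symm
    _ < ∑ i ∈ s ∩ u, g i + #(s \ u) • g b₀ := by
      rw [← sum_const]
      refine add_lt_add_right (sum_lt_sum_of_nonempty hsu fun a ha => ?_) _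
      exact hg (hsep a ha b₀ (min'_mem _ _))
    _ = ∑ i ∈ u ∩ s, g i + #(u \ s) • g b₀ := by rw [inter_comm, card_sdiff_comm hcard]
    _ ≤ ∑ i ∈ u ∩ s, g i + ∑ i ∈ u \ s, g i := by
      gcongr
      exact card_nsmul_le_sum _ _ _ fun b hb => hg.monotone (min'_le _ _ hb)
    _ = ∑ i ∈ u, g i := sum_inter_add_sum_sdiff _ _ _

theorem Complex.tendsto_exp_mul_ofReal_atBot {w : ℂ} (hw : 0 < w.re) :
    Tendsto (fun t : ℝ => Complex.exp (w * t)) atBot (𝓝 0) := by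
  refine Complex.tendsto_exp_comap_re_atBot.comp (tendsto_comap_iff.2 ?_)
  simpa [Function.comp_def, Complex.re_mul_ofReal, mul_comm]
    using tendsto_id.const_mul_atBot hw

theorem tendsto_exp_mul_sum_exp_atBot {ι : Type*} {S : Finset ι} (a w : ι → ℂ) {i₀ : ι}
    (hi₀ : i₀ ∈ S) (hw : ∀ i ∈ S, i ≠ i₀ → (w i₀).re < (w i).re) :
    Tendsto (fun t : ℝ => Complex.exp (-w i₀ * t) * ∑ i ∈ S, a i * Complex.exp (w i * t))
      atBot (𝓝 (a i₀)) := by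
  classical
  have hsplit : ∀ t : ℝ, Complex.exp (-w i₀ * t) * ∑ i ∈ S, a i * Complex.exp (w i * t) =
      ∑ i ∈ S, a i * Complex.exp ((w i - w i₀) * t) := fun t => by
    rw [mul_sum]
    refine sum_congr rfl fun i _ => ?_
    rw [sub_mul, sub_eq_add_neg, ← neg_mul, add_comm, Complex.exp_add]
    ring
  simp_rw [hsplit]
  rw [show a i₀ = ∑ i ∈ S, if i = i₀ then a i else 0 by simp [hi₀]]
  refine tendsto_finsetSum _ fun i hi => ?_
  split_ifs with h
  · subst h; simp
  · simpa using (Complex.tendsto_exp_mul_ofReal_atBot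
      (by simpa using hw i hi h)).const_mul (a i)

section TodaTau

variable {N : ℕ} (ζ r : Fin N → ℂ)

noncomputable def tauCoef (s : Finset (Fin N)) : ℂ :=
  (∏ j ∈ s, r j) ^ 2 * (∏ p ∈ s, ∏ q ∈ s, if p < q then 2 * ζ q - 2 * ζ p else 1) ^ 2

theorem tendsto_exp_mul_tauA_atBot (hζ : StrictMono fun i => (ζ i).re) {u : Finset (Fin N)}
    (hu : IsUpperSet (u : Set (Fin N))) :
    Tendsto (fun t : ℝ => Complex.exp (2 * (∑ j ∈ u, ζ j) * t) * tauA N ζ r #u t) atBot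
      (𝓝 (tauCoef ζ r u)) := by
  have hdom : ∀ s ∈ powersetCard #u univ, s ≠ u →
      (-2 * ∑ j ∈ u, ζ j).re < (-2 * ∑ j ∈ s, ζ j).re := fun s hs hne => by
    have := sum_lt_sum_of_isUpperSet hζ hu (mem_powersetCard.1 hs).2 hne
    simp only [Complex.re_sum, Complex.mul_re] at this ⊢
    norm_num
    linarith
  refine (tendsto_exp_mul_sum_exp_atBot (tauCoef ζ r) (fun s => -2 * ∑ j ∈ s, ζ j)
    (mem_powersetCard.2 ⟨subset_univ u, rfl⟩) hdom).congr fun t => ?_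
  rw [← neg_mul, neg_neg]
  rfl

theorem tauCoef_insert {a : Fin N} {s : Finset (Fin N)} (ha : ∀ q ∈ s, a < q) :
    tauCoef ζ r (insert a s) =
      r a ^ 2 * (∏ q ∈ s, (2 * ζ q - 2 * ζ a)) ^ 2 * tauCoef ζ r s := by
  have has : a ∉ s := fun h => lt_irrefl a (ha a h)
  have hrow : ∏ q ∈ insert a s, (if a < q then 2 * ζ q - 2 * ζ a else 1) =
      ∏ q ∈ s, (2 * ζ q - 2 * ζ a) := by
    rw [prod_insert has, if_neg (lt_irrefl a), one_mul]
    exact prod_congr rfl fun q hq => if_pos (ha q hq)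
  have hcol : ∀ p ∈ s, ∏ q ∈ insert a s, (if p < q then 2 * ζ q - 2 * ζ p else 1) =
      ∏ q ∈ s, (if p < q then 2 * ζ q - 2 * ζ p else 1) := fun p hp => by
    rw [prod_insert has, if_neg (ha p hp).asymm, one_mul]
  rw [tauCoef, tauCoef, prod_insert has, prod_insert has, hrow, prod_congr rfl hcol]
  ring

theorem tauCoef_ne_zero (hζ : Function.Injective ζ) {s : Finset (Fin N)}
    (hr : ∀ j ∈ s, r j ≠ 0) : tauCoef ζ r s ≠ 0 := by
  refine mul_ne_zero (pow_ne_zero _ (prod_ne_zero_iff.2 hr)) (pow_ne_zero _ ?_)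
  refine prod_ne_zero_iff.2 fun p _ => prod_ne_zero_iff.2 fun q _ => ?_
  split_ifs with hpq
  · rw [← mul_sub, mul_ne_zero_iff]
    exact ⟨two_ne_zero, sub_ne_zero.2 (hζ.ne hpq.ne')⟩
  · exact one_ne_zero

end TodaTau

/-- under the sorting condition `Re ζ_1 < … < Re ζ_N` and with
`r_{k̄+1},…,r_N ≠ 0`, where `k̄ = N+1-k`, one has
`lim_{t→-∞} exp(2 ζ_{k̄} t) A_k(t)/A_{k-1}(t) = r_{k̄}² ∏_{s>k̄} (2ζ_s - 2ζ_{k̄})²`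
(the exponentiated form of `q_k(t) + 2ζ_{k̄} t → β_k⁻` as `t → -∞`, the sorting
property).  Here `k : Fin N` is 0-based (the paper's `k - 1`), so the paper's
`k̄ = N+1-k` is the 0-based index `N-1-k`. -/
theorem stmt_9 (N : ℕ) (ζ r : Fin N → ℂ)
    (hsort : ∀ i j : Fin N, (i : ℕ) < (j : ℕ) → (ζ i).re < (ζ j).re)
    (k : Fin N)
    (hr : ∀ j : Fin N, N - 1 - (k : ℕ) < (j : ℕ) → r j ≠ 0) :
    letI kbar : Fin N := ⟨N - 1 - (k : ℕ), by have := k.isLt; omega⟩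
    Filter.Tendsto
      (fun t : ℝ =>
        Complex.exp (2 * ζ kbar * t) * (tauA N ζ r ((k : ℕ) + 1) t / tauA N ζ r (k : ℕ) t))
      Filter.atBot
      (nhds ((r kbar) ^ 2 *
        (∏ s ∈ Finset.univ.filter (fun s : Fin N => (kbar : ℕ) < (s : ℕ)),
          (2 * ζ s - 2 * ζ kbar)) ^ 2)) := by
  set kbar : Fin N := ⟨N - 1 - k, by omega⟩
  have hζ : StrictMono fun i => (ζ i).re := fun i j hij => hsort i j hij
  have hIoi : univ.filter (fun s : Fin N => (kbar : ℕ) < s) = Ioi kbar := by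
    ext; simp
  have hcard : #(Ioi kbar) = k := by simp [kbar]; omega
  have hnum := tendsto_exp_mul_tauA_atBot ζ r hζ (u := Ici kbar)
    (by simpa using isUpperSet_Ici kbar)
  have hden := tendsto_exp_mul_tauA_atBot ζ r hζ (u := Ioi kbar)
    (by simpa using isUpperSet_Ioi kbar)
  have hden_ne : tauCoef ζ r (Ioi kbar) ≠ 0 :=
    tauCoef_ne_zero ζ r hζ.injective.of_comp fun j hj => hr j (Fin.lt_def.1 (mem_Ioi.1 hj))
  rw [← Ioi_insert, card_insert_of_notMem notMem_Ioi_self, sum_insert notMem_Ioi_self,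
    tauCoef_insert ζ r fun q => mem_Ioi.1, hcard] at hnum
  rw [hcard] at hden
  have hlim := hnum.div hden hden_ne
  rw [mul_div_cancel_right₀ _ hden_ne] at hlim
  rw [hIoi]
  refine hlim.congr fun t => ?_
  rw [Pi.div_apply, mul_div_mul_comm, ← Complex.exp_sub]
  ring_nf
end

section
/- Let f_1, f_2 ∈ ℂ and define the polynomials A_0(t) = 1, A_1(t) = −t²/2 + f_1 t + f_2, A_2(t) = −t²/2 + f_1 t − f_1² − f_2, A_3(t) = 1. Then for k = 1, 2 and all t ∈ ℂ the bilinear identities A_k(t)·A_k''(t) − (A_k'(t))² = A_{k+1}(t)·A_{k−1}(t) hold; i.e., these polynomials provide the completely degenerate (ζ_1 = ζ_2 = ζ_3 = 0) solution of the sl(3) complex Toda chain via q_k(t) = q_1(0) + ln(A_k(t)/A_{k−1}(t)). -/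
lemma aux_deriv (c1 c2 : ℂ) :
    deriv (fun t : ℂ => -t ^ 2 / 2 + c1 * t + c2) = fun t => -t + c1 := by
  funext t
  have h : HasDerivAt (fun t : ℂ => -t ^ 2 / 2 + c1 * t + c2) (-t + c1) t := by
    have h1 : HasDerivAt (fun t : ℂ => -t ^ 2 / 2) (-t) t := by
      simpa [div_eq_mul_inv, mul_comm, mul_assoc] using
        (((hasDerivAt_pow 2 t).neg).div_const 2)
    have h2 : HasDerivAt (fun t : ℂ => c1 * t) c1 t := by
      simpa using (hasDerivAt_id t).const_mul c1
    simpa using (h1.add h2).add_const c2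
  exact h.deriv

lemma aux_deriv2 (c1 : ℂ) :
    deriv (fun t : ℂ => -t + c1) = fun _ => -1 := by
  funext t
  have h : HasDerivAt (fun t : ℂ => -t + c1) (-1) t := by
    simpa using ((hasDerivAt_id t).neg).add_const c1
  exact h.deriv

/-- the polynomials `A_0 = 1`, `A_1 = -t²/2 + f₁t + f₂`,
`A_2 = -t²/2 + f₁t - f₁² - f₂`, `A_3 = 1` satisfy the bilinear identities
`A_k A_k'' - (A_k')² = A_{k+1} A_{k-1}` for `k = 1, 2`; they provide the
completely degenerate (`ζ_1 = ζ_2 = ζ_3 = 0`) solution of the `sl(3)` complex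
Toda chain via `q_k = q_1(0) + ln(A_k/A_{k-1})`. -/
theorem stmt_16 (f1 f2 : ℂ)
    (A0 A1 A2 A3 : ℂ → ℂ)
    (hA0 : A0 = fun _ => 1)
    (hA1 : A1 = fun t => -t ^ 2 / 2 + f1 * t + f2)
    (hA2 : A2 = fun t => -t ^ 2 / 2 + f1 * t - f1 ^ 2 - f2)
    (hA3 : A3 = fun _ => 1) :
    ∀ t : ℂ,
      A1 t * deriv (deriv A1) t - (deriv A1 t) ^ 2 = A2 t * A0 t ∧
      A2 t * deriv (deriv A2) t - (deriv A2 t) ^ 2 = A3 t * A1 t := by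
  intro t
  have hA2' : A2 = fun t => -t ^ 2 / 2 + f1 * t + (-f1 ^ 2 - f2) := by
    rw [hA2]; funext t; ring
  subst hA0 hA1 hA3
  rw [hA2'] ; rw [aux_deriv, aux_deriv, aux_deriv2]
  constructor <;> ring
end
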